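/- The NSA iterates satisfy liminf_{k→∞} k²·(log k)·(log log k)·(f(x_k) − f*) = 0. -/

import Mathlib

/-!
With `α_k = p / (k + p)`, the energy `E_k = ‖z_k - x*‖² + 2η (k + p - 1)² / p² · (f x_k - f*)`
drops by at least `2η k (f x_k - f*) / p²` at every step: this is the estimate-sequence argument,
combining convexity at `y_k` with the decrease `η/2 ‖∇f y_k‖²` of a gradient step from `y_k`, which
the NSA choice of `x_{k+1}` can only improve. Hence `∑ k (f x_k - f*) < ∞`. If the liminf were
positive, `k (f x_k - f*)` would eventually dominate a multiple of `1 / (k log k log log k)`, whose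
series diverges because its terms dominate the increments of `log log log k`.
-/

open Filter Real Set
open scoped InnerProductSpace

lemma liminf_mul_eq_zero_of_summable {b v : ℕ → ℝ} (hb : 0 ≤ b) (hbs : Summable b)
    (hv : ∀ᶠ k in atTop, 0 < v k) (hdiv : ¬ Summable fun k => (v k)⁻¹) :
    liminf (fun k => v k * b k) atTop = 0 := by
  have hnonneg : ∀ᶠ k in atTop, 0 ≤ v k * b k := hv.mono fun k hk => mul_nonneg hk.le (hb k)
  have hsmall : ∀ ε > 0, ∃ᶠ k in atTop, v k * b k ≤ ε := by
    intro ε hε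
    by_contra h
    simp only [not_frequently, not_le] at h
    refine hdiv (Summable.of_norm_bounded_eventually_nat (hbs.div_const ε) ?_)
    filter_upwards [h, hv] with k hk hvk
    rw [norm_inv, Real.norm_of_nonneg hvk.le, le_div_iff₀ hε, inv_mul_le_iff₀ hvk]
    exact hk.le
  refine le_antisymm (le_of_forall_pos_le_add fun ε hε => ?_)
    (le_liminf_of_le (IsCoboundedUnder.of_frequently_le (hsmall 1 one_pos)) hnonneg)
  rw [zero_add]
  exact liminf_le_of_frequently_le (hsmall ε hε) (isBoundedUnder_of_eventually_ge hnonneg)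

lemma not_summable_of_sub_le_of_tendsto_atTop {w F : ℕ → ℝ} (hF : Tendsto F atTop atTop)
    (N : ℕ) (hw : ∀ k ≥ N, F (k + 1) - F k ≤ w k) : ¬ Summable w := by
  intro hs
  have htail : Tendsto (fun M => ∑ k ∈ Finset.range M, w (k + N)) atTop atTop := by
    refine tendsto_atTop_mono (fun M => ?_)
      (tendsto_atTop_add_const_right _ (-F N) ((tendsto_add_atTop_iff_nat N).2 hF))
    calc F (M + N) + -F N = ∑ k ∈ Finset.range M, (F (k + 1 + N) - F (k + N)) := by
          rw [Finset.sum_range_sub (fun k => F (k + N)), zero_add, sub_eq_add_neg]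
      _ ≤ ∑ k ∈ Finset.range M, w (k + N) := Finset.sum_le_sum fun k _ => by
          rw [Nat.add_right_comm]; exact hw (k + N) (Nat.le_add_left N k)
  exact not_tendsto_atTop_of_tendsto_nhds
    ((summable_nat_add_iff N).2 hs).hasSum.tendsto_sum_nat htail

lemma log_sub_log_le_of_sub_le {a b δ : ℝ} (ha : 0 < a) (hb : 0 < b) (h : b - a ≤ δ) :
    log b - log a ≤ δ / a := by
  rw [← log_div hb.ne' ha.ne']
  calc log (b / a) ≤ b / a - 1 := log_le_sub_one_of_pos (div_pos hb ha)
    _ = (b - a) / a := by field_simp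
    _ ≤ δ / a := by gcongr

lemma exp_one_lt_natCast_of_three_le {k : ℕ} (hk : 3 ≤ k) : exp 1 < k := by
  have : (3 : ℝ) ≤ k := by exact_mod_cast hk
  linarith [exp_one_lt_d9]

lemma log_log_log_add_one_sub_le {t : ℝ} (ht : exp 1 < t) :
    log (log (log (t + 1))) - log (log (log t)) ≤ (t * log t * log (log t))⁻¹ := by
  have ht0 : 0 < t := (exp_pos 1).trans ht
  have hlog : 1 < log t := (lt_log_iff_exp_lt ht0).2 ht
  have hlog_le : log t ≤ log (t + 1) := log_le_log ht0 (by linarith)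
  have hloglog : 0 < log (log t) := log_pos hlog
  have hloglog_le : log (log t) ≤ log (log (t + 1)) := log_le_log (by linarith) hlog_le
  have h1 : log (t + 1) - log t ≤ 1 / t :=
    log_sub_log_le_of_sub_le ht0 (by linarith) (by linarith)
  have h2 := log_sub_log_le_of_sub_le (by linarith) (by linarith) h1
  have h3 := log_sub_log_le_of_sub_le hloglog (by linarith) h2
  rwa [div_div, div_div, one_div, ← mul_assoc] at h3

lemma not_summable_inv_mul_log_mul_log_log :
    ¬ Summable fun k : ℕ => ((k : ℝ) * log k * log (log k))⁻¹ := by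
  refine not_summable_of_sub_le_of_tendsto_atTop (F := fun k : ℕ => log (log (log k)))
    (tendsto_log_atTop.comp <| tendsto_log_atTop.comp <| tendsto_log_atTop.comp
      tendsto_natCast_atTop_atTop) 3 fun k hk => ?_
  simpa only [Nat.cast_add, Nat.cast_one] using
    log_log_log_add_one_sub_le (exp_one_lt_natCast_of_three_le hk)

lemma summable_of_succ_add_le {E b : ℕ → ℝ} (hE : ∀ k, 0 ≤ E k) (hb : ∀ k, 0 ≤ b k)
    (h : ∀ k, E (k + 1) + b k ≤ E k) : Summable b := by
  have htele : ∀ n, ∑ i ∈ Finset.range n, b i + E n ≤ E 0 := fun n => by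
    induction n with
    | zero => simp
    | succ n ih => rw [Finset.sum_range_succ]; linarith [h n]
  exact summable_of_sum_range_le hb fun n => by linarith [htele n, hE n]

section

variable {F : Type*} [NormedAddCommGroup F] {f : F → ℝ}

section InnerProductSpace

variable [InnerProductSpace ℝ F] [CompleteSpace F]

lemma hasDerivAt_comp_add_smul {a d : F} {t : ℝ} (hf : DifferentiableAt ℝ f (a + t • d)) :
    HasDerivAt (fun s : ℝ => f (a + s • d)) ⟪gradient f (a + t • d), d⟫_ℝ t := by
  have hline : HasDerivAt (fun s : ℝ => a + s • d) d t := by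
    simpa using ((hasDerivAt_id t).smul_const d).const_add a
  simpa [Function.comp_def] using
    (hasGradientAt_iff_hasFDerivAt.1 hf.hasGradientAt).comp_hasDerivAt t hline

lemma ConvexOn.add_inner_gradient_le (hconv : ConvexOn ℝ univ f) {a : F}
    (hf : DifferentiableAt ℝ f a) (b : F) :
    f a + ⟪gradient f a, b - a⟫_ℝ ≤ f b := by
  have hline : ConvexOn ℝ univ fun t : ℝ => f (a + t • (b - a)) := by
    simpa [Function.comp_def, AffineMap.lineMap_apply_module', add_comm] using
      hconv.comp_affineMap (AffineMap.lineMap a b)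
  have hslope := hline.le_slope_of_hasDerivAt (mem_univ 0) (mem_univ 1) zero_lt_one
    (hasDerivAt_comp_add_smul (by simpa using hf))
  simp only [slope_def_field, one_smul, zero_smul, add_zero, sub_zero, div_one,
    add_sub_cancel] at hslope
  linarith

lemma le_add_inner_gradient_add_of_lipschitz_gradient (hf : Differentiable ℝ f) {L : ℝ}
    (hlip : ∀ u v, ‖gradient f u - gradient f v‖ ≤ L * ‖u - v‖) (a b : F) :
    f b ≤ f a + ⟪gradient f a, b - a⟫_ℝ + L / 2 * ‖b - a‖ ^ 2 := by
  set d := b - a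
  set g : ℝ → ℝ := fun t => f (a + t • d) - t * ⟪gradient f a, d⟫_ℝ - L / 2 * ‖d‖ ^ 2 * t ^ 2
  have hg : ∀ t, HasDerivAt g (⟪gradient f (a + t • d) - gradient f a, d⟫_ℝ
      - L / 2 * ‖d‖ ^ 2 * (2 * t)) t := fun t => by
    rw [inner_sub_left]
    exact ((hasDerivAt_comp_add_smul (hf _)).sub (hasDerivAt_mul_const _)).sub
      (by simpa using (hasDerivAt_pow 2 t).const_mul (L / 2 * ‖d‖ ^ 2))
  have hanti : AntitoneOn g (Ici 0) := by
    refine antitoneOn_of_hasDerivWithinAt_nonpos (convex_Ici 0)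
      (fun t _ => (hg t).continuousAt.continuousWithinAt) (fun t _ => (hg t).hasDerivWithinAt)
      fun t ht => ?_
    rw [interior_Ici, mem_Ioi] at ht
    have hgrad : ‖gradient f (a + t • d) - gradient f a‖ ≤ L * (t * ‖d‖) := by
      simpa [norm_smul, abs_of_pos ht] using hlip (a + t • d) a
    nlinarith [real_inner_le_norm (gradient f (a + t • d) - gradient f a) d,
      mul_le_mul_of_nonneg_right hgrad (norm_nonneg d)]
  have h01 := hanti (mem_Ici.2 le_rfl) (mem_Ici.2 zero_le_one) zero_le_one
  simp only [g, d, one_smul, zero_smul, add_zero, add_sub_cancel, one_mul, one_pow, zero_mul,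
    sub_zero, ne_eq, OfNat.ofNat_ne_zero, not_false_eq_true, zero_pow, mul_zero] at h01
  linarith

lemma le_sub_mul_norm_gradient_sq_of_lipschitz_gradient (hf : Differentiable ℝ f) {L : ℝ}
    (hlip : ∀ u v, ‖gradient f u - gradient f v‖ ≤ L * ‖u - v‖) (a : F) (η : ℝ) :
    f (a - η • gradient f a) ≤ f a - η * (1 - L * η / 2) * ‖gradient f a‖ ^ 2 := by
  have h := le_add_inner_gradient_add_of_lipschitz_gradient hf hlip a (a - η • gradient f a)
  rw [sub_sub_cancel_left, inner_neg_right, real_inner_smul_right, real_inner_self_eq_norm_sq,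
    norm_neg, norm_smul, mul_pow, Real.norm_eq_abs, sq_abs] at h
  linarith

lemma norm_sub_sq_add_le_of_accelerated_step (hconv : ConvexOn ℝ univ f) {x y z x' xstar : F}
    (hf : DifferentiableAt ℝ f y) {α η : ℝ} (hα0 : 0 < α) (hα1 : α ≤ 1) (hη : 0 ≤ η)
    (hy : y = (1 - α) • x + α • z)
    (hx' : f x' ≤ f y - η / 2 * ‖gradient f y‖ ^ 2) :
    ‖z - (η / α) • gradient f y - xstar‖ ^ 2 + 2 * η / α ^ 2 * (f x' - f xstar)
      ≤ ‖z - xstar‖ ^ 2 + 2 * η * (1 - α) / α ^ 2 * (f x - f xstar) := by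
  set g := gradient f y
  have hsplit : α • (z - xstar) = α • (y - xstar) + (1 - α) • (y - x) := by
    rw [hy]; module
  have hinner : (f y - f xstar) - (1 - α) * (f x - f xstar) ≤ α * ⟪g, z - xstar⟫_ℝ := by
    have hxstar := hconv.add_inner_gradient_le hf xstar
    have hx := hconv.add_inner_gradient_le hf x
    rw [← neg_sub y xstar, inner_neg_right] at hxstar
    rw [← neg_sub y x, inner_neg_right] at hx
    rw [← real_inner_smul_right, hsplit, inner_add_right, real_inner_smul_right,
      real_inner_smul_right]
    linarith [mul_le_mul_of_nonneg_left hxstar hα0.le,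
      mul_le_mul_of_nonneg_left hx (sub_nonneg.2 hα1)]
  have hexpand : ‖z - (η / α) • g - xstar‖ ^ 2
      = ‖z - xstar‖ ^ 2 - 2 * (η / α) * ⟪g, z - xstar⟫_ℝ + (η / α) ^ 2 * ‖g‖ ^ 2 := by
    rw [sub_right_comm, norm_sub_sq_real, real_inner_smul_right, norm_smul, mul_pow,
      Real.norm_eq_abs, sq_abs, real_inner_comm]
    ring
  have hα : α ≠ 0 := hα0.ne'
  have hc : 0 ≤ 2 * η / α ^ 2 := by positivity
  have h1 : 2 * η / α ^ 2 * ((f y - f xstar) - (1 - α) * (f x - f xstar))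
      ≤ 2 * (η / α) * ⟪g, z - xstar⟫_ℝ := by
    calc _ ≤ 2 * η / α ^ 2 * (α * ⟪g, z - xstar⟫_ℝ) := mul_le_mul_of_nonneg_left hinner hc
      _ = _ := by field_simp
  have h2 : 2 * η / α ^ 2 * f x' ≤ 2 * η / α ^ 2 * f y - (η / α) ^ 2 * ‖g‖ ^ 2 := by
    calc _ ≤ 2 * η / α ^ 2 * (f y - η / 2 * ‖g‖ ^ 2) := mul_le_mul_of_nonneg_left hx' hc
      _ = _ := by field_simp
  rw [hexpand]
  linear_combination h1 + h2

end InnerProductSpace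

noncomputable def nsaEnergy (f : F → ℝ) (η p : ℝ) (x z : ℕ → F) (xstar : F) (k : ℕ) : ℝ :=
  ‖z k - xstar‖ ^ 2 + 2 * η * (((k : ℝ) + p - 1) ^ 2 / p ^ 2) * (f (x k) - f xstar)

lemma nsaEnergy_nonneg {η p : ℝ} (hη : 0 ≤ η) {x z : ℕ → F} {xstar : F}
    (hmin : ∀ u, f xstar ≤ f u) (k : ℕ) : 0 ≤ nsaEnergy f η p x z xstar k := by
  have := sub_nonneg.2 (hmin (x k))
  unfold nsaEnergy
  positivity

variable [InnerProductSpace ℝ F] [CompleteSpace F]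

lemma nsaEnergy_succ_add_le (hconv : ConvexOn ℝ univ f) (hf : Differentiable ℝ f) {xstar : F}
    (hmin : ∀ u, f xstar ≤ f u) {p η : ℝ} (hp : 3 ≤ p) (hη : 0 ≤ η) {α : ℕ → ℝ}
    (hα : ∀ k : ℕ, α k = p / (k + p)) {x y z : ℕ → F}
    (hy : ∀ k, y k = (1 - α k) • x k + α k • z k)
    (hx : ∀ k, f (x (k + 1)) ≤ f (y k) - η / 2 * ‖gradient f (y k)‖ ^ 2)
    (hz : ∀ k, z (k + 1) = z k - (η / α k) • gradient f (y k)) (k : ℕ) :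
    nsaEnergy f η p x z xstar (k + 1) + 2 * η / p ^ 2 * k * (f (x k) - f xstar)
      ≤ nsaEnergy f η p x z xstar k := by
  have hk : (0 : ℝ) ≤ k := k.cast_nonneg
  have hkp : 0 < (k : ℝ) + p := by linarith
  have hα0 : 0 < α k := by rw [hα]; positivity
  have hα1 : α k ≤ 1 := by rw [hα, div_le_one hkp]; linarith
  have hstep := norm_sub_sq_add_le_of_accelerated_step hconv (hf (y k)) hα0 hα1 hη (hy k) (hx k)
    (xstar := xstar)
  have hinv_sq : 2 * η / α k ^ 2 = 2 * η * (((k + 1 : ℕ) + p - 1) ^ 2 / p ^ 2) := by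
    rw [hα]; push_cast; field_simp; ring
  have hinv_mul : 2 * η * (1 - α k) / α k ^ 2 = 2 * η * (k * (k + p) / p ^ 2) := by
    rw [hα]; field_simp; ring
  -- `p ≥ 3` is exactly what makes `k (k + p) + k ≤ (k + p - 1)²` hold for every `k`
  have hquad : k * (k + p) + k ≤ ((k : ℝ) + p - 1) ^ 2 := by nlinarith
  have hA := sub_nonneg.2 (hmin (x k))
  rw [hinv_sq, hinv_mul, ← hz] at hstep
  unfold nsaEnergy
  have : 2 * η / p ^ 2 * (k * (k + p) + k) * (f (x k) - f xstar)
      ≤ 2 * η / p ^ 2 * ((k : ℝ) + p - 1) ^ 2 * (f (x k) - f xstar) := by gcongr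
  calc _ ≤ ‖z k - xstar‖ ^ 2 + 2 * η / p ^ 2 * (k * (k + p) + k) * (f (x k) - f xstar) := by
        linear_combination hstep
    _ ≤ _ := by linear_combination this

lemma summable_natCast_mul_sub_of_nsa (hconv : ConvexOn ℝ univ f) (hf : Differentiable ℝ f)
    {xstar : F} (hmin : ∀ u, f xstar ≤ f u) {p η : ℝ} (hp : 3 ≤ p) (hη : 0 < η) {α : ℕ → ℝ}
    (hα : ∀ k : ℕ, α k = p / (k + p)) {x y z : ℕ → F}
    (hy : ∀ k, y k = (1 - α k) • x k + α k • z k)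
    (hx : ∀ k, f (x (k + 1)) ≤ f (y k) - η / 2 * ‖gradient f (y k)‖ ^ 2)
    (hz : ∀ k, z (k + 1) = z k - (η / α k) • gradient f (y k)) :
    Summable fun k : ℕ => (k : ℝ) * (f (x k) - f xstar) := by
  have hA k := sub_nonneg.2 (hmin (x k))
  have hc : 2 * η / p ^ 2 ≠ 0 := by positivity
  refine (summable_mul_left_iff hc).1 ?_
  simpa only [mul_assoc] using summable_of_succ_add_le (nsaEnergy_nonneg hη.le hmin)
    (fun k => by have := hA k; positivity)
    (nsaEnergy_succ_add_le hconv hf hmin hp hη.le hα hy hx hz)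

end

theorem nsa_stmt_7_general (n : ℕ)
    (f : EuclideanSpace ℝ (Fin n) → ℝ)
    (hconv : ConvexOn ℝ Set.univ f)
    (hdiff : Differentiable ℝ f)
    (L : ℝ) (hL : 0 < L)
    (hlip : ∀ x x' : EuclideanSpace ℝ (Fin n),
      ‖gradient f x - gradient f x'‖ ≤ L * ‖x - x'‖)
    (xstar : EuclideanSpace ℝ (Fin n)) (hmin : ∀ u, f xstar ≤ f u)
    (p : ℝ) (hp : 3 ≤ p)
    (η : ℝ) (hη0 : 0 < η) (hη : η ≤ 2 / (3 * L))
    (α : ℕ → ℝ) (hα : ∀ k : ℕ, α k = p / (k + p))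
    (x y z : ℕ → EuclideanSpace ℝ (Fin n))
    (hy : ∀ k, y k = (1 - α k) • x k + α k • z k)
    (hx : ∀ k, x (k + 1) =
      if f (y k - η • gradient f (y k)) ≤ f (x k - η • gradient f (x k))
      then y k - η • gradient f (y k)
      else x k - η • gradient f (x k))
    (hz : ∀ k, z (k + 1) = z k - (η / α k) • gradient f (y k))
    :
    Filter.liminf
      (fun k : ℕ =>
        (k : ℝ) ^ 2 * Real.log k * Real.log (Real.log k) * (f (x k) - f xstar))
      Filter.atTop = 0 := by
  have hLη : L * η ≤ 1 := by
    rw [le_div_iff₀ (by positivity)] at hη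
    nlinarith
  have hdesc : ∀ k, f (x (k + 1)) ≤ f (y k) - η / 2 * ‖gradient f (y k)‖ ^ 2 := fun k => by
    have hgrad := le_sub_mul_norm_gradient_sq_of_lipschitz_gradient hdiff hlip (y k) η
    have : η / 2 * ‖gradient f (y k)‖ ^ 2 ≤ η * (1 - L * η / 2) * ‖gradient f (y k)‖ ^ 2 := by
      gcongr
      nlinarith
    rw [hx k]
    split_ifs with h <;> linarith
  have hweight : ∀ᶠ k : ℕ in atTop, 0 < (k : ℝ) * log k * log (log k) := by
    filter_upwards [eventually_ge_atTop 3] with k hk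
    have hlog : 1 < log k :=
      (lt_log_iff_exp_lt (by positivity)).2 (exp_one_lt_natCast_of_three_le hk)
    have := log_pos hlog
    have : (0 : ℝ) < k := by positivity
    positivity
  have hsum := summable_natCast_mul_sub_of_nsa hconv hdiff hmin hp hη0 hα hy hdesc hz
  have hfactor : (fun k : ℕ => (k : ℝ) ^ 2 * log k * log (log k) * (f (x k) - f xstar))
      = fun k : ℕ => (k * log k * log (log k)) * (k * (f (x k) - f xstar)) :=
    funext fun k => by ring
  rw [hfactor]
  exact liminf_mul_eq_zero_of_summable
    (fun k => mul_nonneg k.cast_nonneg (sub_nonneg.2 (hmin _))) hsum hweight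
    not_summable_inv_mul_log_mul_log_log

theorem nsa_stmt_7 (n : ℕ) (hn : 1 ≤ n)
    (f : EuclideanSpace ℝ (Fin n) → ℝ)
    (hconv : ConvexOn ℝ Set.univ f)
    (hdiff : Differentiable ℝ f)
    (L : ℝ) (hL : 0 < L)
    (hlip : ∀ x x' : EuclideanSpace ℝ (Fin n),
      ‖gradient f x - gradient f x'‖ ≤ L * ‖x - x'‖)
    (xstar : EuclideanSpace ℝ (Fin n)) (hmin : ∀ u, f xstar ≤ f u)
    (p : ℝ) (hp : 3 ≤ p)
    (η : ℝ) (hη0 : 0 < η) (hη : η ≤ 2 / (3 * L))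
    (α : ℕ → ℝ) (hα : ∀ k : ℕ, α k = p / (k + p))
    (x y z : ℕ → EuclideanSpace ℝ (Fin n))
    (hx0 : x 0 = z 0)
    (hy : ∀ k, y k = (1 - α k) • x k + α k • z k)
    (hx : ∀ k, x (k + 1) =
      if f (y k - η • gradient f (y k)) ≤ f (x k - η • gradient f (x k))
      then y k - η • gradient f (y k)
      else x k - η • gradient f (x k))
    (hz : ∀ k, z (k + 1) = z k - (η / α k) • gradient f (y k))
    :
    Filter.liminf
      (fun k : ℕ =>
        (k : ℝ) ^ 2 * Real.log k * Real.log (Real.log k) * (f (x k) - f xstar))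
      Filter.atTop = 0 :=
  nsa_stmt_7_general n f hconv hdiff L hL hlip xstar hmin p hp η hη0 hη α hα x y z hy hx hz
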